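/- A subset Y of an unbounded metric space X is large (i.e., X = B(Y,r) for some r ≥ 0) if and only if Δ_p(Y) = {q ∈ X^# : Y ∈ q and q ∥ p} is nonempty for every p ∈ X^#. -/

import Mathlib

open Metric Bornology Set

variable {X : Type*} [MetricSpace X]

/-- `B(A,r) = ⋃_{a∈A} B(a,r)` where `B(a,r)` is the closed ball of radius `r`. -/
def ballU (A : Set X) (r : ℝ) : Set X := ⋃ a ∈ A, Metric.closedBall a r

/-- `X^#`: the set of ultrafilters on `X` all of whose members are unbounded. -/
def sharp (X : Type*) [MetricSpace X] : Set (Ultrafilter X) :=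
  {p | ∀ P ∈ p, ¬ Bornology.IsBounded P}

/-- Parallelity: `p ∥ q` iff there is `r ≥ 0` with `B(Q,r) ∈ p` for every `Q ∈ q`. -/
def Par (p q : Ultrafilter X) : Prop :=
  ∃ r : ℝ, 0 ≤ r ∧ ∀ Q ∈ q, ballU Q r ∈ p

/-- `p̆ = {q ∈ X^# : q ∥ p}`. -/
def pbreve (p : Ultrafilter X) : Set (Ultrafilter X) :=
  {q | q ∈ sharp X ∧ Par q p}

/-- The `p`-companion `Δ_p(Y) = {q ∈ X^# : Y ∈ q, q ∥ p}`. -/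
def Delta (p : Ultrafilter X) (Y : Set X) : Set (Ultrafilter X) :=
  {q | q ∈ sharp X ∧ Y ∈ q ∧ Par q p}

/-- A set `S ⊆ X^#` is invariant if `p ∈ S`, `q ∈ X^#`, `q ∥ p` imply `q ∈ S`. -/
def Invt (S : Set (Ultrafilter X)) : Prop :=
  ∀ p ∈ S, ∀ q, q ∈ sharp X → Par q p → q ∈ S

/-- `Y` is large if `X = B(Y,r)` for some `r ≥ 0`. -/
def Large (Y : Set X) : Prop := ∃ r : ℝ, 0 ≤ r ∧ ballU Y r = Set.univ

/-- `Y` is thick if for every `r ≥ 0` there is `y ∈ Y` with `B(y,r) ⊆ Y`. -/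
def Thick (Y : Set X) : Prop := ∀ r : ℝ, 0 ≤ r → ∃ y ∈ Y, Metric.closedBall y r ⊆ Y

/-- `Y` is prethick if `B(Y,r)` is thick for some `r ≥ 0`. -/
def Prethick (Y : Set X) : Prop := ∃ r : ℝ, 0 ≤ r ∧ Thick (ballU Y r)

/-- `Y` is small if `(X∖Y) ∩ L` is large for every large `L`. -/
def SmallSet (Y : Set X) : Prop := ∀ L : Set X, Large L → Large (Yᶜ ∩ L)

/-- `Y` is thin if for each `r ≥ 0` there is a bounded `V` with
`B(y,r) ∩ Y = {y}` for all `y ∈ Y∖V`. -/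
def Thin (Y : Set X) : Prop :=
  ∀ r : ℝ, 0 ≤ r → ∃ V : Set X, Bornology.IsBounded V ∧
    ∀ y ∈ Y \ V, Metric.closedBall y r ∩ Y = {y}

/-- `Y` is `n`-thin if for each `r ≥ 0` there is a bounded `V` with
`|B(y,r) ∩ Y| ≤ n` for all `y ∈ Y∖V`. -/
def NThin (n : ℕ) (Y : Set X) : Prop :=
  ∀ r : ℝ, 0 ≤ r → ∃ V : Set X, Bornology.IsBounded V ∧
    ∀ y ∈ Y \ V, (Metric.closedBall y r ∩ Y).encard ≤ n

/-- `M` is a minimal nonempty closed invariant subset of `X^#`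
(closures/closedness taken in the Stone topology on ultrafilters). -/
def MinCI (M : Set (Ultrafilter X)) : Prop :=
  M ⊆ sharp X ∧ M.Nonempty ∧ IsClosed M ∧ Invt M ∧
    ∀ S ⊆ M, S.Nonempty → IsClosed S → Invt S → S = M

/-!
If `Y` is large, a retraction `f : X → Y` moving points by at most `r` pushes every
`p ∈ X^#` to an ultrafilter `f p ∈ X^#` containing `Y` and parallel to `p`.
If `Y` is not large, the complements of the neighbourhoods `B(Y, n)` are unbounded and
decreasing, so some `p ∈ X^#` contains all of them; a `q ∥ p` with radius `s ≤ n` then contains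
`B(X ∖ B(Y, n), s)`, which is disjoint from `Y`.
-/

open Filter

lemma mem_ballU {A : Set X} {r : ℝ} {x : X} : x ∈ ballU A r ↔ ∃ a ∈ A, dist x a ≤ r := by
  simp [ballU]

lemma ballU_mono {A : Set X} {r s : ℝ} (h : r ≤ s) : ballU A r ⊆ ballU A s :=
  biUnion_mono subset_rfl fun _ _ => closedBall_subset_closedBall h

lemma disjoint_ballU_compl_ballU {A : Set X} {r s : ℝ} (h : s ≤ r) :
    Disjoint A (ballU (ballU A r)ᶜ s) := by
  refine Set.disjoint_left.2 fun a ha hx => ?_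
  obtain ⟨x, hx, hax⟩ := mem_ballU.1 hx
  exact hx (mem_ballU.2 ⟨a, ha, (dist_comm x a).trans_le (hax.trans h)⟩)

lemma mem_sharp_iff_le_cobounded {p : Ultrafilter X} : p ∈ sharp X ↔ ↑p ≤ cobounded X := by
  refine ⟨fun hp s hs => ?_, fun hp P hP hPb => Ultrafilter.compl_notMem_iff.2 hP (hp hPb)⟩
  by_contra h
  exact hp sᶜ (Ultrafilter.compl_mem_iff_notMem.2 h) (isBounded_def.2 (by rwa [compl_compl]))

lemma map_mem_sharp_of_dist_le {p : Ultrafilter X} (hp : p ∈ sharp X) {f : X → X} {r : ℝ}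
    (hf : ∀ x, dist x (f x) ≤ r) : p.map f ∈ sharp X := fun Q hQ hQb =>
  hp _ (Ultrafilter.mem_map.1 hQ) <| (hQb.cthickening (δ := r)).subset
    fun x hx => mem_cthickening_of_dist_le x (f x) r Q hx (hf x)

lemma par_map_of_dist_le (p : Ultrafilter X) {f : X → X} {r : ℝ} (hr : 0 ≤ r)
    (hf : ∀ x, dist x (f x) ≤ r) : Par (p.map f) p :=
  ⟨r, hr, fun _ hQ => Ultrafilter.mem_map.2 <| mem_of_superset hQ
    fun x hx => mem_ballU.2 ⟨x, hx, (dist_comm (f x) x).trans_le (hf x)⟩⟩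

lemma Large.delta_nonempty {Y : Set X} (hY : Large Y) {p : Ultrafilter X} (hp : p ∈ sharp X) :
    (Delta p Y).Nonempty := by
  obtain ⟨r, hr, hball⟩ := hY
  choose f hfY hf using fun x => mem_ballU.1 (hball ▸ mem_univ x : x ∈ ballU Y r)
  exact ⟨p.map f, map_mem_sharp_of_dist_le hp hf, Ultrafilter.mem_map.2 (univ_mem' hfY),
    par_map_of_dist_le p hr hf⟩

lemma exists_mem_sharp_forall_mem {ι : Type*} [Nonempty ι] {D : ι → Set X}
    (hD : Directed (· ⊇ ·) D) (hunb : ∀ i, ¬IsBounded (D i)) :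
    ∃ p ∈ sharp X, ∀ i, D i ∈ p := by
  have hbasis := hasBasis_iInf_principal hD
  have : NeBot (cobounded X ⊓ ⨅ i, 𝓟 (D i)) := by
    refine inf_neBot_iff.2 fun s hs t ht => ?_
    obtain ⟨i, -, hi⟩ := hbasis.mem_iff.1 ht
    by_contra hst
    have hsub : D i ⊆ sᶜ := fun x hx hxs => hst ⟨x, hxs, hi hx⟩
    exact hunb i ((isBounded_def.2 (by rwa [compl_compl])).subset hsub)
  have hle := Ultrafilter.of_le (cobounded X ⊓ ⨅ i, 𝓟 (D i))
  exact ⟨_, mem_sharp_iff_le_cobounded.2 (hle.trans inf_le_left),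
    fun i => hle (mem_inf_of_right (mem_iInf_of_mem i (mem_principal_self _)))⟩

lemma large_of_isBounded_compl_ballU (hX : ¬IsBounded (univ : Set X)) {Y : Set X} {r : ℝ}
    (hr : 0 ≤ r) (h : IsBounded (ballU Y r)ᶜ) : Large Y := by
  obtain ⟨y₀, hy₀⟩ : Y.Nonempty := by
    rw [nonempty_iff_ne_empty]
    rintro rfl
    exact hX (by simpa [ballU] using h)
  obtain ⟨R, hrR, hR⟩ := h.subset_closedBall_lt r y₀
  refine ⟨R, hr.trans hrR.le, eq_univ_of_forall fun x => ?_⟩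
  by_cases hx : x ∈ ballU Y r
  · exact ballU_mono hrR.le hx
  · exact mem_ballU.2 ⟨y₀, hy₀, hR hx⟩

lemma large_of_forall_delta_nonempty (hX : ¬IsBounded (univ : Set X)) {Y : Set X}
    (h : ∀ p ∈ sharp X, (Delta p Y).Nonempty) : Large Y := by
  by_contra hY
  have hunb (n : ℕ) : ¬IsBounded (ballU Y n)ᶜ := fun hb =>
    hY (large_of_isBounded_compl_ballU hX n.cast_nonneg hb)
  have hanti : Antitone fun n : ℕ => (ballU Y n)ᶜ := fun _ _ hmn =>
    compl_subset_compl.2 (ballU_mono (Nat.cast_le.2 hmn))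
  obtain ⟨p, hp, hDp⟩ := exists_mem_sharp_forall_mem hanti.directed_ge hunb
  obtain ⟨q, -, hYq, s, -, hpar⟩ := h p hp
  have hdisj := disjoint_ballU_compl_ballU (A := Y) (Nat.le_ceil s)
  exact q.empty_notMem (hdisj.inter_eq ▸ inter_mem hYq (hpar _ (hDp ⌈s⌉₊)))

theorem stmt7 (hX : ¬ Bornology.IsBounded (Set.univ : Set X)) (Y : Set X) :
    Large Y ↔ ∀ p ∈ sharp X, (Delta p Y).Nonempty :=
  ⟨fun hY _ hp => hY.delta_nonempty hp, large_of_forall_delta_nonempty hX⟩
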